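/- arXiv:1310.5924 — 3 statements merged into one kernel-verified Lean document; each statement's English description precedes it below -/
import Mathlib

section
/- If the volumes V_n satisfy V_1 = 1 and the recursion 2^n = 2·V_n + Σ_{k=1}^{n-1} V_k·V_{n-k} for all n ≥ 1, then V_n = (1/2^n)·C(2n,n) for all n ≥ 1. -/
open Finset

section AuxLemmas
open Nat


lemma sum_symm (m : ℕ) :
    2 * ∑ k ∈ range (m+1), k * (centralBinom k * centralBinom (m-k))
      = m * ∑ k ∈ range (m+1), centralBinom k * centralBinom (m-k) := by
  have h := Finset.sum_range_reflect
    (fun k => k * (centralBinom k * centralBinom (m-k))) (m+1)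
  rw [two_mul, Finset.mul_sum]
  nth_rewrite 1 [← h]
  rw [← Finset.sum_add_distrib]
  apply Finset.sum_congr rfl
  intro k hk
  have hk' : k ≤ m := by simpa [Nat.lt_succ_iff] using hk
  have h1 : m + 1 - 1 - k = m - k := by omega
  have h2 : m - (m - k) = k := by omega
  rw [h1, h2, mul_comm (centralBinom (m-k)) (centralBinom k)]
  rw [← Nat.add_mul, Nat.sub_add_cancel hk']

lemma conv_eq (n : ℕ) :
    ∑ k ∈ range (n+1), centralBinom k * centralBinom (n-k) = 4 ^ n := by
  induction n with
  | zero => simp [centralBinom]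
  | succ n ih =>
    have key : (n+1) * ∑ k ∈ range (n+2), centralBinom k * centralBinom (n+1-k)
        = (n+1) * 4 ^ (n+1) := by
      rw [← sum_symm (n+1)]
      have step : ∑ k ∈ range (n+2), k * (centralBinom k * centralBinom (n+1-k))
          = ∑ k ∈ range (n+1), (4*k+2) * (centralBinom k * centralBinom (n-k)) := by
        rw [Finset.sum_range_succ' (fun k => k * (centralBinom k * centralBinom (n+1-k))) (n+1)]
        simp only [Nat.zero_mul, add_zero]
        apply Finset.sum_congr rfl
        intro k hk
        have h1 : n + 1 - (k+1) = n - k := by omega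
        rw [h1, ← mul_assoc, Nat.succ_mul_centralBinom_succ k]
        ring
      rw [step]
      have expand : ∑ k ∈ range (n+1), (4*k+2) * (centralBinom k * centralBinom (n-k))
          = 2 * (2 * ∑ k ∈ range (n+1), k * (centralBinom k * centralBinom (n-k)))
            + 2 * ∑ k ∈ range (n+1), centralBinom k * centralBinom (n-k) := by
        rw [Finset.mul_sum, Finset.mul_sum, Finset.mul_sum, ← Finset.sum_add_distrib]
        apply Finset.sum_congr rfl
        intro k _
        ring
      rw [expand, sum_symm n, ih]
      ring
    exact Nat.eq_of_mul_eq_mul_left (by omega) key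

end AuxLemmas

/-- If `V 1 = 1` and `2^n = 2·V n + Σ_{k=1}^{n-1} V k · V (n-k)` for all `n ≥ 1`,
then `V n = (1/2^n)·C(2n,n)` for all `n ≥ 1`. -/
theorem volume_recursion_solution (V : ℕ → ℝ) (h1 : V 1 = 1)
    (hrec : ∀ n : ℕ, 1 ≤ n →
      (2 : ℝ) ^ n = 2 * V n + ∑ k ∈ Finset.Ico 1 n, V k * V (n - k)) :
    ∀ n : ℕ, 1 ≤ n → V n = (Nat.choose (2 * n) n : ℝ) / 2 ^ n := by
  intro n
  induction n using Nat.strong_induction_on with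
  | _ n IH =>
    intro hn
    have hrn := hrec n hn
    have hsum : ∑ k ∈ Finset.Ico 1 n, V k * V (n - k)
        = ((4:ℝ) ^ n - 2 * Nat.centralBinom n) / 2 ^ n := by
      have hcongr : ∑ k ∈ Finset.Ico 1 n, V k * V (n - k)
          = ∑ k ∈ Finset.Ico 1 n,
              ((Nat.centralBinom k : ℝ) * Nat.centralBinom (n - k)) / 2 ^ n := by
        apply Finset.sum_congr rfl
        intro k hk
        obtain ⟨hk1, hk2⟩ := Finset.mem_Ico.mp hk
        rw [IH k hk2 hk1, IH (n-k) (by omega) (by omega)]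
        rw [Nat.centralBinom_eq_two_mul_choose, Nat.centralBinom_eq_two_mul_choose]
        rw [_root_.div_mul_div_comm, ← pow_add, Nat.add_sub_cancel' (le_of_lt hk2)]
      rw [hcongr, ← Finset.sum_div]
      congr 1
      have hconv := conv_eq n
      have hsplit : ∑ k ∈ Finset.range (n+1),
          ((Nat.centralBinom k : ℝ) * Nat.centralBinom (n - k))
          = (Nat.centralBinom n : ℝ)
            + ∑ k ∈ Finset.Ico 1 n, ((Nat.centralBinom k : ℝ) * Nat.centralBinom (n - k))
            + (Nat.centralBinom n : ℝ) := by
        rw [Finset.sum_range_succ, Finset.range_eq_Ico,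
          Finset.sum_eq_sum_Ico_succ_bot (by omega : 0 < n)]
        simp [Nat.centralBinom_zero]
      have hc : ∑ k ∈ Finset.range (n+1),
          ((Nat.centralBinom k : ℝ) * Nat.centralBinom (n - k)) = (4:ℝ) ^ n := by
        exact_mod_cast hconv
      rw [hc] at hsplit
      linarith
    rw [hsum] at hrn
    have h2n : (2:ℝ) ^ n ≠ 0 := by positivity
    have hb : ((2*n).choose n : ℝ) = (Nat.centralBinom n : ℝ) := by
      rw [Nat.centralBinom_eq_two_mul_choose]
    rw [hb]
    have h4 : (4:ℝ) ^ n = 2 ^ n * 2 ^ n := by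
      rw [← mul_pow]; norm_num
    field_simp at hrn ⊢
    nlinarith [hrn]
end

section
/- The expected value of the coordinate d_1 with respect to the uniform (normalized Lebesgue) measure on the planar polytope P_5(1) = {(d_1,d_2) ∈ ℝ² : 0 ≤ d_1 ≤ 2, 0 ≤ d_2 ≤ 2, |d_1−d_2| ≤ 1, d_1+d_2 ≥ 1} equals 17/15. -/
/-!
By Fubini, the vertical section of `P_5(1)` over `d₁ ∈ [0, 2]` is the interval
`[|d₁ - 1|, min 2 (d₁ + 1)]`, of length `2 d₁` for `d₁ ≤ 1` and `3 - d₁` for `d₁ ≥ 1`.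
Integrating these lengths gives the area `5 / 2` and the first moment `17 / 6`,
whose quotient is `17 / 15`.
-/

open MeasureTheory

/-- The fan triangulation moment polytope for equilateral pentagons:
`P_5(1) = {(d₁,d₂) : 0 ≤ d₁ ≤ 2, 0 ≤ d₂ ≤ 2, |d₁−d₂| ≤ 1, d₁+d₂ ≥ 1}`. -/
def pentagonPolytope : Set (Fin 2 → ℝ) :=
  {d | 0 ≤ d 0 ∧ d 0 ≤ 2 ∧ 0 ≤ d 1 ∧ d 1 ≤ 2 ∧ |d 0 - d 1| ≤ 1 ∧ 1 ≤ d 0 + d 1}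

open Set

theorem setIntegral_comp_fst_eq_integral_measureReal_smul
    {α β E : Type*} [MeasurableSpace α] [MeasurableSpace β] [NormedAddCommGroup E]
    [NormedSpace ℝ E] [CompleteSpace E] {μ : Measure α} {ν : Measure β} [SFinite μ] [SFinite ν]
    {S : Set (α × β)} (hS : MeasurableSet S) {f : α → E}
    (hf : IntegrableOn (fun p ↦ f p.1) S (μ.prod ν)) :
    ∫ p in S, f p.1 ∂(μ.prod ν) = ∫ x, ν.real (Prod.mk x ⁻¹' S) • f x ∂μ := by
  rw [← integral_indicator hS, integral_prod _ ((integrable_indicator_iff hS).2 hf)]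
  congr 1 with x
  simp_rw [← indicator_comp_right (Prod.mk x)]
  rw [integral_indicator (measurable_prodMk_left hS)]
  exact setIntegral_const (f x)

def pentagonRegion : Set (ℝ × ℝ) :=
  {p | 0 ≤ p.1 ∧ p.1 ≤ 2 ∧ 0 ≤ p.2 ∧ p.2 ≤ 2 ∧ |p.1 - p.2| ≤ 1 ∧ 1 ≤ p.1 + p.2}

theorem isClosed_pentagonRegion : IsClosed pentagonRegion := by
  simp only [pentagonRegion, ofPred_and]
  repeat' apply IsClosed.inter
  all_goals exact isClosed_le (by fun_prop) (by fun_prop)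

theorem isCompact_pentagonRegion : IsCompact pentagonRegion := by
  have hbox : IsCompact (Icc (0 : ℝ) 2 ×ˢ Icc (0 : ℝ) 2) := isCompact_Icc.prod isCompact_Icc
  refine hbox.of_isClosed_subset isClosed_pentagonRegion ?_
  rintro ⟨x, y⟩ ⟨hx₀, hx₂, hy₀, hy₂, -⟩
  exact ⟨⟨hx₀, hx₂⟩, hy₀, hy₂⟩

noncomputable def pentagonSectionLength (x : ℝ) : ℝ :=
  (Icc 0 2).indicator (fun x ↦ min 2 (x + 1) - |x - 1|) x

theorem volume_real_pentagonRegion_section (x : ℝ) :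
    volume.real (Prod.mk x ⁻¹' pentagonRegion) = pentagonSectionLength x := by
  by_cases hx : x ∈ Icc (0 : ℝ) 2
  · have hsection : Prod.mk x ⁻¹' pentagonRegion = Icc |x - 1| (min 2 (x + 1)) := by
      ext y
      simp only [pentagonRegion, mem_preimage, mem_ofPred_eq, mem_Icc, le_min_iff, abs_le]
      constructor
      · rintro ⟨-, -, -, hy₂, ⟨h₁, h₂⟩, h₃⟩
        exact ⟨⟨by linarith, by linarith⟩, hy₂, by linarith⟩
      · rintro ⟨⟨h₁, h₂⟩, hy₂, h₃⟩
        exact ⟨hx.1, hx.2, by linarith, hy₂, ⟨by linarith, by linarith⟩, by linarith⟩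
    rw [hsection, Real.volume_real_Icc_of_le, pentagonSectionLength,
      indicator_of_mem hx]
    simp only [le_min_iff, abs_le]
    constructor <;> constructor <;> linarith [hx.1, hx.2]
  · have hsection : Prod.mk x ⁻¹' pentagonRegion = ∅ :=
      eq_empty_of_forall_notMem fun _ h ↦ hx ⟨h.1, h.2.1⟩
    rw [hsection, measureReal_empty, pentagonSectionLength, indicator_of_notMem hx]

theorem integral_pentagonSectionLength_mul {f : ℝ → ℝ} (hf : Continuous f) :
    ∫ x, pentagonSectionLength x * f x =
      (∫ x in (0 : ℝ)..1, 2 * x * f x) + ∫ x in (1 : ℝ)..2, (3 - x) * f x := by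
  have hcont : Continuous fun x : ℝ ↦ (min 2 (x + 1) - |x - 1|) * f x := by fun_prop
  simp_rw [pentagonSectionLength, ← indicator_mul_left]
  rw [integral_indicator measurableSet_Icc, integral_Icc_eq_integral_Ioc,
    ← intervalIntegral.integral_of_le zero_le_two,
    ← intervalIntegral.integral_add_adjacent_intervals (b := 1)
      (hcont.intervalIntegrable _ _) (hcont.intervalIntegrable _ _)]
  congr 1
  · refine intervalIntegral.integral_congr fun x hx ↦ ?_
    rw [uIcc_of_le zero_le_one, mem_Icc] at hx
    rw [min_eq_right (by linarith), abs_of_nonpos (by linarith)]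
    ring
  · refine intervalIntegral.integral_congr fun x hx ↦ ?_
    rw [uIcc_of_le one_le_two, mem_Icc] at hx
    rw [min_eq_left (by linarith), abs_of_nonneg (by linarith)]
    ring

theorem integral_pentagonSectionLength : ∫ x, pentagonSectionLength x = 5 / 2 := by
  have h := integral_pentagonSectionLength_mul (f := fun _ ↦ 1) continuous_const
  simp only [mul_one] at h
  have h₁ : IntervalIntegrable (fun _ ↦ (3 : ℝ)) volume 1 2 := intervalIntegrable_const
  have h₂ : IntervalIntegrable (fun x : ℝ ↦ x) volume 1 2 := intervalIntegral.intervalIntegrable_id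
  rw [h, intervalIntegral.integral_const_mul, integral_id, intervalIntegral.integral_sub h₁ h₂,
    intervalIntegral.integral_const, integral_id]
  norm_num

theorem integral_pentagonSectionLength_mul_id :
    ∫ x, pentagonSectionLength x * x = 17 / 6 := by
  have h := integral_pentagonSectionLength_mul (f := fun x ↦ x) continuous_id
  have h₁ : IntervalIntegrable (fun x : ℝ ↦ 3 * x) volume 1 2 :=
    (continuous_const_mul 3).intervalIntegrable _ _
  have h₂ : IntervalIntegrable (fun x : ℝ ↦ x ^ 2) volume 1 2 :=
    (continuous_pow 2).intervalIntegrable _ _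
  simp only [mul_assoc, ← sq, sub_mul] at h
  rw [h, intervalIntegral.integral_const_mul, integral_pow, intervalIntegral.integral_sub h₁ h₂,
    intervalIntegral.integral_const_mul, integral_id, integral_pow]
  norm_num

theorem volume_real_pentagonRegion : volume.real pentagonRegion = 5 / 2 := by
  have h := setIntegral_comp_fst_eq_integral_measureReal_smul (μ := volume) (ν := volume)
    isClosed_pentagonRegion.measurableSet (f := fun _ ↦ (1 : ℝ))
    (integrableOn_const isCompact_pentagonRegion.measure_lt_top.ne)
  simp_rw [← Measure.volume_eq_prod, setIntegral_const, smul_eq_mul, mul_one,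
    volume_real_pentagonRegion_section] at h
  rw [h, integral_pentagonSectionLength]

theorem setIntegral_fst_pentagonRegion : ∫ p in pentagonRegion, p.1 = 17 / 6 := by
  rw [Measure.volume_eq_prod, setIntegral_comp_fst_eq_integral_measureReal_smul
    isClosed_pentagonRegion.measurableSet (f := fun x ↦ x)
    (continuous_fst.continuousOn.integrableOn_compact isCompact_pentagonRegion)]
  simp_rw [volume_real_pentagonRegion_section, smul_eq_mul]
  exact integral_pentagonSectionLength_mul_id

/-- The expected value of the coordinate `d₁` with respect to the uniform
(normalized Lebesgue) measure on `P_5(1)` equals `17/15`. -/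
theorem pentagon_expected_chord :
    (∫ d, d 0 ∂((MeasureTheory.volume pentagonPolytope)⁻¹ •
      MeasureTheory.volume.restrict pentagonPolytope)) = 17 / 15 := by
  have hP : pentagonPolytope = MeasurableEquiv.finTwoArrow ⁻¹' pentagonRegion := rfl
  have hpres := volume_preserving_finTwoArrow ℝ
  have harea : volume.real pentagonPolytope = 5 / 2 := by
    rw [hP, hpres.measureReal_preimage isClosed_pentagonRegion.measurableSet.nullMeasurableSet,
      volume_real_pentagonRegion]
  have hmoment : ∫ d in pentagonPolytope, d 0 = 17 / 6 := by
    rw [hP, ← setIntegral_fst_pentagonRegion]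
    exact hpres.setIntegral_preimage_emb MeasurableEquiv.finTwoArrow.measurableEmbedding
      (fun p : ℝ × ℝ ↦ p.1) _
  rw [integral_smul_measure, hmoment, ENNReal.toReal_inv, ← measureReal_def, harea]
  norm_num
end

section
/- The volume of the confined polytope P(3,h) = {(z_1,z_2,z_3) ∈ [-1,1]³ : |z_i + ⋯ + z_j| ≤ h for all 1 ≤ i ≤ j ≤ 3} equals 23/3 when h = 2, 155/24 when h = 3/2, 4 when h = 1, and 1/2 when h = 1/2. -/
open MeasureTheory Finset

/-- The slab-confinement polytope `P(3,h) ⊂ [-1,1]³`: points of the cube all of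
whose consecutive-coordinate window sums `z_i + ⋯ + z_j` have absolute value at
most `h`. -/
def slabPolytope (h : ℝ) : Set (Fin 3 → ℝ) :=
  {z | (∀ i, |z i| ≤ 1) ∧
    ∀ i j : Fin 3, i ≤ j → |∑ k ∈ Finset.Icc i j, z k| ≤ h}

/-!
For `h ≥ 1` the window bounds `|zᵢ| ≤ h` are implied by the cube, and the remaining constraints
confine `z₁` to an interval depending on `z₀`, and `z₂` to an interval depending on `(z₀, z₁)`.
So the volume is `∫ A_h(z₀) dz₀`, where the section area `A_h` is the integral of a piecewise
linear slice length. Since `P(3,h) = -P(3,h)`, `A_h` is even, and on `[0, 1]` it is an explicit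
piecewise polynomial for `h = 2, 3/2, 1`. For `h ≤ 1` the cube bounds are implied by the window
bounds, so `P(3,h) = h • P(3,1)` and the volume is `4 h³`.
-/

theorem intervalIntegral_eq_of_eq_quadratic {f : ℝ → ℝ} {a b c d e : ℝ} (hab : a ≤ b)
    (hf : ∀ y ∈ Set.Icc a b, f y = c + d * y + e * y ^ 2) :
    ∫ y in a..b, f y = c * (b - a) + d * (b ^ 2 - a ^ 2) / 2 + e * (b ^ 3 - a ^ 3) / 3 := by
  rw [intervalIntegral.integral_congr (g := fun y => c + d * y + e * y ^ 2)
      (fun y hy => hf y (by rwa [Set.uIcc_of_le hab] at hy)),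
    intervalIntegral.integral_add (f := fun y => c + d * y) (g := fun y => e * y ^ 2)
      ((by fun_prop : Continuous _).intervalIntegrable _ _)
      ((by fun_prop : Continuous _).intervalIntegrable _ _),
    intervalIntegral.integral_add (f := fun _ => c) (g := fun y => d * y)
      intervalIntegrable_const ((by fun_prop : Continuous _).intervalIntegrable _ _),
    intervalIntegral.integral_const_mul, intervalIntegral.integral_const_mul]
  simp only [intervalIntegral.integral_const, smul_eq_mul, integral_id, integral_pow]
  ring

theorem intervalIntegral_comp_abs {f : ℝ → ℝ} (hf : Continuous f) {c : ℝ} (hc : 0 ≤ c) :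
    ∫ x in -c..c, f |x| = 2 * ∫ x in 0..c, f x := by
  have hfa : Continuous fun x => f |x| := by fun_prop
  have hneg : ∫ x in -c..0, f |x| = ∫ x in -c..0, f (-x) :=
    intervalIntegral.integral_congr fun x hx => by
      rw [Set.uIcc_of_le (by linarith)] at hx
      rw [abs_of_nonpos hx.2]
  have hpos : ∫ x in 0..c, f |x| = ∫ x in 0..c, f x :=
    intervalIntegral.integral_congr fun x hx => by
      rw [Set.uIcc_of_le hc] at hx
      rw [abs_of_nonneg hx.1]
  rw [← intervalIntegral.integral_add_adjacent_intervals (b := 0) (hfa.intervalIntegrable _ _)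
    (hfa.intervalIntegrable _ _), hneg, hpos, intervalIntegral.integral_comp_neg, neg_zero,
    neg_neg, two_mul]

theorem setLIntegral_Icc_ofReal {f : ℝ → ℝ} {a b : ℝ} (hab : a ≤ b)
    (hf : IntegrableOn f (Set.Icc a b)) (hf0 : ∀ x ∈ Set.Icc a b, 0 ≤ f x) :
    ∫⁻ x in Set.Icc a b, ENNReal.ofReal (f x) = ENNReal.ofReal (∫ x in a..b, f x) := by
  rw [← ofReal_integral_eq_lintegral_ofReal hf
    ((ae_restrict_iff' measurableSet_Icc).2 (ae_of_all _ hf0)),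
    intervalIntegral.integral_of_le hab, integral_Icc_eq_integral_Ioc]

theorem volume_region_between_cc_eq_lintegral {α : Type*} [MeasurableSpace α] {μ : Measure α}
    [SFinite μ] {s : Set α} {f g : α → ℝ} (hf : Measurable f) (hg : Measurable g) (hs : MeasurableSet s) :
    μ.prod volume {p : α × ℝ | p.1 ∈ s ∧ p.2 ∈ Set.Icc (f p.1) (g p.1)} =
      ∫⁻ x in s, ENNReal.ofReal (g x - f x) ∂μ := by
  rw [Measure.prod_apply (measurableSet_region_between_cc hf hg hs), ← lintegral_indicator hs]
  congr 1 with x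
  by_cases hx : x ∈ s
  · simp only [hx, Set.indicator_of_mem, Set.preimage_ofPred_eq, true_and, Set.ofPred_mem_eq,
      Real.volume_Icc]
  · simp [hx]

theorem volume_iterated_region_between_cc_eq_lintegral {s : Set ℝ} {A B : ℝ → ℝ} {L U : ℝ → ℝ → ℝ}
    (hs : MeasurableSet s) (hA : Measurable A) (hB : Measurable B)
    (hL : Measurable (Function.uncurry L)) (hU : Measurable (Function.uncurry U)) :
    volume {p : ℝ × ℝ × ℝ | p.1 ∈ s ∧ p.2.1 ∈ Set.Icc (A p.1) (B p.1) ∧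
        p.2.2 ∈ Set.Icc (L p.1 p.2.1) (U p.1 p.2.1)} =
      ∫⁻ x in s, ∫⁻ y in Set.Icc (A x) (B x), ENNReal.ofReal (U x y - L x y) := by
  have hmeas : MeasurableSet {p : ℝ × ℝ × ℝ | p.1 ∈ s ∧ p.2.1 ∈ Set.Icc (A p.1) (B p.1) ∧
      p.2.2 ∈ Set.Icc (L p.1 p.2.1) (U p.1 p.2.1)} := by
    have hL' : Measurable fun p : ℝ × ℝ × ℝ => L p.1 p.2.1 :=
      hL.comp (measurable_fst.prodMk measurable_snd.fst)
    have hU' : Measurable fun p : ℝ × ℝ × ℝ => U p.1 p.2.1 :=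
      hU.comp (measurable_fst.prodMk measurable_snd.fst)
    simp only [Set.mem_Icc, Set.ofPred_and]
    exact (measurable_fst hs).inter
      (((measurableSet_le (hA.comp measurable_fst) measurable_snd.fst).inter
        (measurableSet_le measurable_snd.fst (hB.comp measurable_fst))).inter
      ((measurableSet_le hL' measurable_snd.snd).inter (measurableSet_le measurable_snd.snd hU')))
  rw [Measure.volume_eq_prod, Measure.prod_apply hmeas, ← lintegral_indicator hs]
  congr 1 with x
  by_cases hx : x ∈ s
  · have hslice : Prod.mk x ⁻¹' {p : ℝ × ℝ × ℝ | p.1 ∈ s ∧ p.2.1 ∈ Set.Icc (A p.1) (B p.1) ∧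
        p.2.2 ∈ Set.Icc (L p.1 p.2.1) (U p.1 p.2.1)} =
        {q : ℝ × ℝ | q.1 ∈ Set.Icc (A x) (B x) ∧ q.2 ∈ Set.Icc (L x q.1) (U x q.1)} := by
      simp [hx]
    rw [Set.indicator_of_mem hx, hslice, Measure.volume_eq_prod]
    exact volume_region_between_cc_eq_lintegral (hL.comp measurable_prodMk_left)
      (hU.comp measurable_prodMk_left) measurableSet_Icc
  · simp [hx]

def finThreeArrowEquiv : (Fin 3 → ℝ) ≃ᵐ ℝ × ℝ × ℝ :=
  (MeasurableEquiv.piFinSuccAbove (fun _ => ℝ) 0).trans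
    (MeasurableEquiv.prodCongr (MeasurableEquiv.refl ℝ) MeasurableEquiv.finTwoArrow)

theorem finThreeArrowEquiv_apply (z : Fin 3 → ℝ) : finThreeArrowEquiv z = (z 0, z 1, z 2) :=
  rfl

theorem measurePreserving_finThreeArrowEquiv : MeasurePreserving finThreeArrowEquiv :=
  (volume_preserving_piFinSuccAbove (fun _ : Fin 3 => ℝ) 0).trans
    ((MeasurePreserving.id volume).prod (volume_preserving_finTwoArrow ℝ))

theorem mem_slabPolytope_iff {h : ℝ} {z : Fin 3 → ℝ} :
    z ∈ slabPolytope h ↔ (|z 0| ≤ 1 ∧ |z 1| ≤ 1 ∧ |z 2| ≤ 1) ∧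
      (|z 0| ≤ h ∧ |z 0 + z 1| ≤ h ∧ |z 0 + z 1 + z 2| ≤ h) ∧
      (|z 1| ≤ h ∧ |z 1 + z 2| ≤ h) ∧ |z 2| ≤ h := by
  have h01 : Finset.Icc (0 : Fin 3) 1 = {0, 1} := by decide
  have h02 : Finset.Icc (0 : Fin 3) 2 = {0, 1, 2} := by decide
  have h12 : Finset.Icc (1 : Fin 3) 2 = {1, 2} := by decide
  simp [slabPolytope, Fin.forall_fin_succ, h01, h02, h12, add_assoc]

def slabLower (h t : ℝ) : ℝ := max (-1) (-h - t)

def slabUpper (h t : ℝ) : ℝ := min 1 (h - t)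

theorem mem_Icc_slabLower_slabUpper {h s t : ℝ} :
    t ∈ Set.Icc (slabLower h s) (slabUpper h s) ↔ |t| ≤ 1 ∧ |s + t| ≤ h := by
  simp only [slabLower, slabUpper, Set.mem_Icc, max_le_iff, le_min_iff, abs_le]
  constructor <;> intro H <;> refine ⟨⟨?_, ?_⟩, ?_, ?_⟩ <;> linarith

theorem zero_mem_Icc_slabLower_slabUpper {h t : ℝ} (ht : |t| ≤ h) :
    (0 : ℝ) ∈ Set.Icc (slabLower h t) (slabUpper h t) :=
  mem_Icc_slabLower_slabUpper.2 ⟨by simp, by simpa using ht⟩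

theorem slabLower_neg (h t : ℝ) : slabLower h (-t) = -slabUpper h t := by
  rw [slabLower, slabUpper, ← max_neg_neg, neg_sub', sub_neg_eq_add, neg_add_eq_sub]

theorem slabUpper_neg (h t : ℝ) : slabUpper h (-t) = -slabLower h t := by
  rw [← neg_neg (slabUpper h (-t)), ← slabLower_neg, neg_neg]

theorem slabPolytope_eq_preimage {h : ℝ} (h1 : 1 ≤ h) :
    slabPolytope h = finThreeArrowEquiv ⁻¹' {p | p.1 ∈ Set.Icc (-1) 1 ∧
      p.2.1 ∈ Set.Icc (slabLower h p.1) (slabUpper h p.1) ∧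
      p.2.2 ∈ Set.Icc (max (slabLower h p.2.1) (slabLower h (p.1 + p.2.1)))
        (min (slabUpper h p.2.1) (slabUpper h (p.1 + p.2.1)))} := by
  ext z
  simp only [mem_slabPolytope_iff, Set.mem_preimage, finThreeArrowEquiv_apply, Set.mem_ofPred_eq,
    ← Set.Icc_inter_Icc, Set.mem_inter_iff, mem_Icc_slabLower_slabUpper,
    Set.mem_Icc (a := (-1 : ℝ)) (b := 1), ← abs_le, add_assoc]
  constructor
  · rintro ⟨⟨hz0, hz1, hz2⟩, ⟨-, hz01, hz012⟩, ⟨-, hz12⟩, -⟩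
    exact ⟨hz0, ⟨hz1, hz01⟩, ⟨hz2, hz12⟩, hz2, hz012⟩
  · rintro ⟨hz0, ⟨hz1, hz01⟩, ⟨hz2, hz12⟩, -, hz012⟩
    exact ⟨⟨hz0, hz1, hz2⟩, ⟨hz0.trans h1, hz01, hz012⟩, ⟨hz1.trans h1, hz12⟩, hz2.trans h1⟩

-- The length of the interval of admissible `z₂` when `z₀ = x` and `z₁ = y`.
def sliceLength (h x y : ℝ) : ℝ :=
  min (slabUpper h y) (slabUpper h (x + y)) - max (slabLower h y) (slabLower h (x + y))

noncomputable def sectionArea (h x : ℝ) : ℝ :=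
  ∫ y in slabLower h x..slabUpper h x, sliceLength h x y

theorem continuous_sliceLength (h x : ℝ) : Continuous (sliceLength h x) := by
  unfold sliceLength slabLower slabUpper
  fun_prop

theorem intervalIntegrable_sliceLength (h x a b : ℝ) :
    IntervalIntegrable (sliceLength h x) volume a b :=
  (continuous_sliceLength h x).intervalIntegrable a b

theorem sliceLength_nonneg {h x y : ℝ} (h1 : 1 ≤ h)
    (hy : y ∈ Set.Icc (slabLower h x) (slabUpper h x)) : 0 ≤ sliceLength h x y := by
  obtain ⟨hy1, hxy⟩ := mem_Icc_slabLower_slabUpper.1 hy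
  obtain ⟨hlo, hhi⟩ := zero_mem_Icc_slabLower_slabUpper (hy1.trans h1)
  obtain ⟨hlo', hhi'⟩ := zero_mem_Icc_slabLower_slabUpper hxy
  exact sub_nonneg.2 ((max_le hlo hlo').trans (le_min hhi hhi'))

theorem sectionArea_nonneg {h x : ℝ} (h1 : 1 ≤ h) (hx : |x| ≤ 1) : 0 ≤ sectionArea h x := by
  obtain ⟨hlo, hhi⟩ := zero_mem_Icc_slabLower_slabUpper (hx.trans h1)
  exact intervalIntegral.integral_nonneg (hlo.trans hhi) fun y hy => sliceLength_nonneg h1 hy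

theorem sliceLength_neg (h x y : ℝ) : sliceLength h (-x) (-y) = sliceLength h x y := by
  simp only [sliceLength, ← neg_add, slabLower_neg, slabUpper_neg, min_neg_neg, max_neg_neg]
  ring

theorem sectionArea_neg (h x : ℝ) : sectionArea h (-x) = sectionArea h x := by
  have hcongr : ∫ y in -slabUpper h x..-slabLower h x, sliceLength h (-x) y =
      ∫ y in -slabUpper h x..-slabLower h x, sliceLength h x (-y) :=
    intervalIntegral.integral_congr fun y _ => by rw [← sliceLength_neg, neg_neg]
  rw [sectionArea, sectionArea, slabLower_neg, slabUpper_neg, hcongr,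
    intervalIntegral.integral_comp_neg, neg_neg, neg_neg]

theorem volume_slabPolytope_eq_lintegral {h : ℝ} (h1 : 1 ≤ h) :
    volume (slabPolytope h) = ∫⁻ x in Set.Icc (-1) 1, ENNReal.ofReal (sectionArea h x) := by
  rw [slabPolytope_eq_preimage h1, measurePreserving_finThreeArrowEquiv.measure_preimage_equiv,
    volume_iterated_region_between_cc_eq_lintegral (A := slabLower h) (B := slabUpper h)
      (L := fun x y => max (slabLower h y) (slabLower h (x + y)))
      (U := fun x y => min (slabUpper h y) (slabUpper h (x + y))) measurableSet_Icc
      (by unfold slabLower; fun_prop) (by unfold slabUpper; fun_prop)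
      (by unfold slabLower; fun_prop) (by unfold slabUpper; fun_prop)]
  refine setLIntegral_congr_fun measurableSet_Icc fun x hx => ?_
  obtain ⟨hlo, hhi⟩ := zero_mem_Icc_slabLower_slabUpper ((abs_le.2 hx).trans h1)
  exact setLIntegral_Icc_ofReal (hlo.trans hhi) (continuous_sliceLength h x).integrableOn_Icc
    fun y hy => sliceLength_nonneg h1 hy

theorem volume_slabPolytope_eq_two_mul_integral {h : ℝ} (h1 : 1 ≤ h) {q : ℝ → ℝ}
    (hq : Continuous q) (hsec : ∀ x ∈ Set.Icc (0 : ℝ) 1, sectionArea h x = q x) :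
    volume (slabPolytope h) = ENNReal.ofReal (2 * ∫ x in (0 : ℝ)..1, q x) := by
  have hsec_abs : ∀ x ∈ Set.Icc (-1 : ℝ) 1, sectionArea h x = q |x| := fun x hx => by
    rw [← hsec |x| ⟨abs_nonneg x, abs_le.2 hx⟩]
    rcases abs_choice x with hx' | hx' <;> rw [hx']
    exact (sectionArea_neg h x).symm
  rw [volume_slabPolytope_eq_lintegral h1,
    setLIntegral_congr_fun measurableSet_Icc fun x hx => by rw [hsec_abs x hx],
    setLIntegral_Icc_ofReal (by norm_num) (by fun_prop : Continuous fun x => q |x|).integrableOn_Icc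
      fun x hx => hsec_abs x hx ▸ sectionArea_nonneg h1 (abs_le.2 hx),
    intervalIntegral_comp_abs hq zero_le_one]

theorem sectionArea_two {x : ℝ} (hx : x ∈ Set.Icc (0 : ℝ) 1) :
    sectionArea 2 x = 4 - x ^ 2 / 2 := by
  obtain ⟨hx0, hx1⟩ := hx
  have hlo : slabLower 2 x = -1 := max_eq_left (by linarith)
  have hhi : slabUpper 2 x = 1 := min_eq_left (by linarith)
  rw [sectionArea, hlo, hhi,
    ← intervalIntegral.integral_add_adjacent_intervals (b := 1 - x)
      (intervalIntegrable_sliceLength ..) (intervalIntegrable_sliceLength ..),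
    intervalIntegral_eq_of_eq_quadratic (c := 2) (d := 0) (e := 0) (by linarith)
      fun y ⟨hy0, hy1⟩ => by simp only [sliceLength, slabLower, slabUpper]; grind,
    intervalIntegral_eq_of_eq_quadratic (c := 3 - x) (d := -1) (e := 0) (by linarith)
      fun y ⟨hy0, hy1⟩ => by simp only [sliceLength, slabLower, slabUpper]; grind]
  ring

theorem sectionArea_one {x : ℝ} (hx : x ∈ Set.Icc (0 : ℝ) 1) : sectionArea 1 x = 3 - 2 * x := by
  obtain ⟨hx0, hx1⟩ := hx
  have hlo : slabLower 1 x = -1 := max_eq_left (by linarith)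
  have hhi : slabUpper 1 x = 1 - x := min_eq_right (by linarith)
  rw [sectionArea, hlo, hhi,
    ← intervalIntegral.integral_add_adjacent_intervals (b := 0)
      (intervalIntegrable_sliceLength ..) (intervalIntegrable_sliceLength ..),
    ← intervalIntegral.integral_add_adjacent_intervals (b := -x)
      (intervalIntegrable_sliceLength ..) (intervalIntegrable_sliceLength ..),
    intervalIntegral_eq_of_eq_quadratic (c := 2) (d := 1) (e := 0) (by linarith)
      fun y ⟨hy0, hy1⟩ => by simp only [sliceLength, slabLower, slabUpper]; grind,
    intervalIntegral_eq_of_eq_quadratic (c := 2 - x) (d := 0) (e := 0) (by linarith)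
      fun y ⟨hy0, hy1⟩ => by simp only [sliceLength, slabLower, slabUpper]; grind,
    intervalIntegral_eq_of_eq_quadratic (c := 2 - x) (d := -1) (e := 0) (by linarith)
      fun y ⟨hy0, hy1⟩ => by simp only [sliceLength, slabLower, slabUpper]; grind]
  ring

theorem sectionArea_three_halves {x : ℝ} (hx : x ∈ Set.Icc (0 : ℝ) 1) :
    sectionArea (3 / 2) x = min (35 / 8 - 2 * x) (15 / 4 - x / 2 - x ^ 2 / 2) := by
  obtain ⟨hx0, hx1⟩ := hx
  have hlo : slabLower (3 / 2) x = -1 := max_eq_left (by linarith)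
  set u := slabUpper (3 / 2) x with hu
  have hu_ge : 1 / 2 - x ≤ u := le_min (by linarith) (by linarith)
  rw [sectionArea, hlo, ← hu,
    ← intervalIntegral.integral_add_adjacent_intervals (b := 1 / 2 - x)
      (intervalIntegrable_sliceLength ..) (intervalIntegrable_sliceLength ..),
    ← intervalIntegral.integral_add_adjacent_intervals (b := -1 / 2)
      (intervalIntegrable_sliceLength ..) (intervalIntegrable_sliceLength ..),
    intervalIntegral_eq_of_eq_quadratic (c := 5 / 2) (d := 1) (e := 0) (by linarith)
      fun y ⟨hy0, hy1⟩ => by simp only [sliceLength, slabLower, slabUpper]; grind,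
    intervalIntegral_eq_of_eq_quadratic (c := 2) (d := 0) (e := 0) (by linarith)
      fun y ⟨hy0, hy1⟩ => by simp only [sliceLength, slabLower, slabUpper]; grind,
    intervalIntegral_eq_of_eq_quadratic (c := 5 / 2 - x) (d := -1) (e := 0) hu_ge
      fun y ⟨hy0, hy1⟩ => by
        simp only [hu, sliceLength, slabLower, slabUpper] at hy1 ⊢; grind]
  rcases le_total x (1 / 2) with hx' | hx'
  · rw [hu, slabUpper, min_eq_left (by linarith), min_eq_right (by nlinarith)]
    ring
  · rw [hu, slabUpper, min_eq_right (by linarith), min_eq_left (by nlinarith)]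
    ring

theorem integral_min_three_halves :
    ∫ x in (0 : ℝ)..1, min (35 / 8 - 2 * x) (15 / 4 - x / 2 - x ^ 2 / 2) = 155 / 48 := by
  have hcont : Continuous fun x : ℝ => min (35 / 8 - 2 * x) (15 / 4 - x / 2 - x ^ 2 / 2) := by
    fun_prop
  rw [← intervalIntegral.integral_add_adjacent_intervals (b := 1 / 2)
      (hcont.intervalIntegrable _ _) (hcont.intervalIntegrable _ _),
    intervalIntegral_eq_of_eq_quadratic (c := 15 / 4) (d := -1 / 2) (e := -1 / 2) (by norm_num)
      fun x ⟨hx0, hx1⟩ => by rw [min_eq_right (by nlinarith)]; ring,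
    intervalIntegral_eq_of_eq_quadratic (c := 35 / 8) (d := -2) (e := 0) (by norm_num)
      fun x ⟨hx0, hx1⟩ => by rw [min_eq_left (by nlinarith)]; ring]
  norm_num

open scoped Pointwise in
theorem slabPolytope_eq_smul {h : ℝ} (h0 : 0 < h) (h1 : h ≤ 1) :
    slabPolytope h = h • slabPolytope 1 := by
  have habs (a : ℝ) : |h⁻¹ * a| ≤ 1 ↔ |a| ≤ h := by
    rw [abs_mul, abs_inv, abs_of_pos h0, inv_mul_le_iff₀ h0, mul_one]
  ext z
  rw [Set.mem_smul_set_iff_inv_smul_mem₀ h0.ne']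
  simp only [slabPolytope, Set.mem_ofPred_eq, Pi.smul_apply, smul_eq_mul, ← Finset.mul_sum, habs]
  have hdiag (hsum : ∀ i j : Fin 3, i ≤ j → |∑ k ∈ Finset.Icc i j, z k| ≤ h) (i : Fin 3) :
      |z i| ≤ h := by
    simpa using hsum i i le_rfl
  exact ⟨fun ⟨_, hsum⟩ => ⟨hdiag hsum, hsum⟩,
    fun ⟨_, hsum⟩ => ⟨fun i => (hdiag hsum i).trans h1, hsum⟩⟩

open scoped Pointwise in
theorem volume_slabPolytope_of_le_one {h : ℝ} (h0 : 0 < h) (h1 : h ≤ 1) :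
    volume (slabPolytope h) = ENNReal.ofReal (h ^ 3) * volume (slabPolytope 1) := by
  rw [slabPolytope_eq_smul h0 h1, Measure.addHaar_smul, Module.finrank_fin_fun,
    abs_of_pos (pow_pos h0 3)]

/-- The volume of `P(3,h)` equals `23/3` for `h = 2`, `155/24` for `h = 3/2`,
`4` for `h = 1`, and `1/2` for `h = 1/2`. -/
theorem slabPolytope_volumes :
    MeasureTheory.volume (slabPolytope 2) = ENNReal.ofReal (23 / 3) ∧
    MeasureTheory.volume (slabPolytope (3 / 2)) = ENNReal.ofReal (155 / 24) ∧
    MeasureTheory.volume (slabPolytope 1) = ENNReal.ofReal 4 ∧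
    MeasureTheory.volume (slabPolytope (1 / 2)) = ENNReal.ofReal (1 / 2) := by
  have hone : volume (slabPolytope 1) = ENNReal.ofReal 4 := by
    rw [volume_slabPolytope_eq_two_mul_integral le_rfl (by fun_prop) fun _ => sectionArea_one,
      intervalIntegral_eq_of_eq_quadratic (c := 3) (d := -2) (e := 0) zero_le_one
        fun x _ => by ring]
    norm_num
  refine ⟨?_, ?_, hone, ?_⟩
  · rw [volume_slabPolytope_eq_two_mul_integral (by norm_num) (by fun_prop)
        fun _ => sectionArea_two,
      intervalIntegral_eq_of_eq_quadratic (c := 4) (d := 0) (e := -1 / 2) zero_le_one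
        fun x _ => by ring]
    norm_num
  · rw [volume_slabPolytope_eq_two_mul_integral (by norm_num) (by fun_prop)
        fun _ => sectionArea_three_halves,
      integral_min_three_halves]
    norm_num
  · rw [volume_slabPolytope_of_le_one (by norm_num) (by norm_num), hone,
      ← ENNReal.ofReal_mul (by norm_num)]
    norm_num
end
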